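/- arXiv:1703.06853 — 5 statements merged into one kernel-verified Lean document; each statement's English description precedes it below -/
import Mathlib

section
/- Let W(k) be stochastic matrices satisfying: (i) w_{ii}(k) ≥ δ and nonzero off-diagonal entries are ≥ δ (for fixed δ > 0 and all k); (ii) there exists B ≥ 1 such that for every k, the graph of W(k) + W(k+1) + ⋯ + W(k+B-1) is strongly connected. Then for every k, the product Φ(k+B,k) = W(k+B-1)⋯W(k) has all diagonal entries ≥ δ^B, and the directed graph on {1,…,n} whose edges are pairs (i,j) with Φ(k+B,k)_{ij} ≥ δ^B is strongly connected. -/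
open Matrix Finset Filter Topology

def Stochastic {n : ℕ} (W : Matrix (Fin n) (Fin n) ℝ) : Prop :=
  (∀ i j, 0 ≤ W i j) ∧ ∀ i, ∑ j, W i j = 1

noncomputable def vmax {n : ℕ} (hn : 0 < n) (x : Fin n → ℝ) : ℝ :=
  Finset.univ.sup' ⟨⟨0, hn⟩, Finset.mem_univ _⟩ x

noncomputable def vmin {n : ℕ} (hn : 0 < n) (x : Fin n → ℝ) : ℝ :=
  Finset.univ.inf' ⟨⟨0, hn⟩, Finset.mem_univ _⟩ x

def Phi {n : ℕ} (W : ℕ → Matrix (Fin n) (Fin n) ℝ) (k : ℕ) : ℕ → Matrix (Fin n) (Fin n) ℝ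
  | 0 => 1
  | j + 1 => W (k + j) * Phi W k j

/-!
Every factor of `Φ(k+B,k)` has diagonal at least `δ`, so an entry `δ ≤ w_ab(k+t)` of one factor
survives in the product with weight `δ^t` from below and `δ^(B-t-1)` from above: the path that
stays at `a` until time `k+t`, jumps to `b`, and then stays at `b`. Hence every arc of the graph of
`W(k) + ⋯ + W(k+B-1)` is an arc of `𝒢_{δ^B}[Φ(k+B,k)]`.
-/

namespace Matrix

variable {ι R : Type*} [Fintype ι] [Semiring R] [PartialOrder R] [IsOrderedRing R]
  {A B : Matrix ι ι R}

theorem mul_apply_nonneg (hA : ∀ i j, 0 ≤ A i j) (hB : ∀ i j, 0 ≤ B i j) (i j : ι) :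
    0 ≤ (A * B) i j :=
  Finset.sum_nonneg fun l _ => mul_nonneg (hA i l) (hB l j)

theorem mul_le_mul_apply_of_le {a b : R} {i l j : ι} (hA : ∀ i j, 0 ≤ A i j)
    (hB : ∀ i j, 0 ≤ B i j) (ha : a ≤ A i l) (hb : b ≤ B l j) (hb₀ : 0 ≤ b) :
    a * b ≤ (A * B) i j :=
  calc a * b ≤ A i l * B l j := mul_le_mul ha hb hb₀ (hA i l)
    _ ≤ (A * B) i j :=
      Finset.single_le_sum (fun m _ => mul_nonneg (hA i m) (hB m j)) (Finset.mem_univ l)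

end Matrix

section Phi

variable {n : ℕ} {W : ℕ → Matrix (Fin n) (Fin n) ℝ}

theorem Phi_add (k a b : ℕ) : Phi W k (a + b) = Phi W (k + a) b * Phi W k a := by
  induction b with
  | zero => simp [Phi]
  | succ b ih =>
    rw [← add_assoc, Phi, Phi, ih, ← Matrix.mul_assoc, add_assoc]

variable (hW : ∀ k i j, 0 ≤ W k i j)
include hW

theorem Phi_nonneg (k m : ℕ) (i j : Fin n) : 0 ≤ Phi W k m i j := by
  induction m generalizing i j with
  | zero => by_cases h : i = j <;> simp [Phi, Matrix.one_apply, h]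
  | succ m ih => exact Matrix.mul_apply_nonneg (hW _) ih i j

variable {δ : ℝ} (hδ : 0 ≤ δ) (hdiag : ∀ k i, δ ≤ W k i i)
include hδ hdiag

theorem pow_le_Phi_diag (k m : ℕ) (i : Fin n) : δ ^ m ≤ Phi W k m i i := by
  induction m with
  | zero => simp [Phi]
  | succ m ih =>
    rw [pow_succ', Phi]
    exact Matrix.mul_le_mul_apply_of_le (hW _) (Phi_nonneg hW k m) (hdiag _ i) ih
      (pow_nonneg hδ m)

theorem pow_le_Phi_of_le_apply {k m t : ℕ} (ht : t < m) {a b : Fin n}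
    (hab : δ ≤ W (k + t) a b) : δ ^ m ≤ Phi W k m a b := by
  obtain ⟨r, rfl⟩ : ∃ r, m = t + 1 + r := ⟨m - (t + 1), by omega⟩
  have hjump : δ ^ (t + 1) ≤ Phi W k (t + 1) a b :=
    pow_succ' δ t ▸ Matrix.mul_le_mul_apply_of_le (hW _) (Phi_nonneg hW k t) hab
      (pow_le_Phi_diag hW hδ hdiag k t b) (pow_nonneg hδ t)
  rw [pow_add, mul_comm, Phi_add]
  exact Matrix.mul_le_mul_apply_of_le (Phi_nonneg hW _ _) (Phi_nonneg hW k _)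
    (pow_le_Phi_diag hW hδ hdiag _ r a) hjump (pow_nonneg hδ _)

end Phi

theorem stmt6_general {n : ℕ} (W : ℕ → Matrix (Fin n) (Fin n) ℝ) (δ : ℝ) (hδ : 0 < δ)
    (hW : ∀ k, Stochastic (W k)) (hdiag : ∀ k i, δ ≤ W k i i)
    (hoff : ∀ k i j, i ≠ j → W k i j = 0 ∨ δ ≤ W k i j)
    (B : ℕ)
    (hconn : ∀ k i j, Relation.ReflTransGen
      (fun a b => (∑ t ∈ Finset.range B, W (k + t)) a b ≠ 0) i j) :
    ∀ k, (∀ i, δ ^ B ≤ Phi W k B i i) ∧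
      ∀ i j, Relation.ReflTransGen (fun a b => δ ^ B ≤ Phi W k B a b) i j := by
  have hW₀ : ∀ k i j, 0 ≤ W k i j := fun k => (hW k).1
  intro k
  refine ⟨pow_le_Phi_diag hW₀ hδ.le hdiag k B, fun i j => ?_⟩
  refine Relation.ReflTransGen.mono (fun a b hab => ?_) _ _ (hconn k i j)
  simp only [Matrix.sum_apply] at hab
  obtain ⟨t, ht, hne⟩ := Finset.exists_ne_zero_of_sum_ne_zero hab
  have hδab : δ ≤ W (k + t) a b := by
    by_cases h : a = b
    · exact h ▸ hdiag _ a
    · exact (hoff _ a b h).resolve_left hne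
  exact pow_le_Phi_of_le_apply hW₀ hδ.le hdiag (Finset.mem_range.mp ht) hδab

theorem stmt6 {n : ℕ} (W : ℕ → Matrix (Fin n) (Fin n) ℝ) (δ : ℝ) (hδ : 0 < δ)
    (hW : ∀ k, Stochastic (W k)) (hdiag : ∀ k i, δ ≤ W k i i)
    (hoff : ∀ k i j, i ≠ j → W k i j = 0 ∨ δ ≤ W k i j)
    (B : ℕ) (hB : 1 ≤ B)
    (hconn : ∀ k i j, Relation.ReflTransGen
      (fun a b => (∑ t ∈ Finset.range B, W (k + t)) a b ≠ 0) i j) :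
    ∀ k, (∀ i, δ ^ B ≤ Phi W k B i i) ∧
      ∀ i j, Relation.ReflTransGen (fun a b => δ ^ B ≤ Phi W k B a b) i j :=
  stmt6_general W δ hδ hW hdiag hoff B hconn
end

section
/- Let W₀ be a primitive stochastic matrix and let d be such that every entry of W₀^d is at least ε > 0. Let W(k) be a sequence of stochastic matrices, each equal either to W₀ or to some stochastic matrix commuting with W₀, and suppose W(k) = W₀ for infinitely many k. Then for every k there exists m > k such that every entry of the product Φ(m,k) = W(m-1)⋯W(k) is at least ε. -/
open Matrix Finset Filter Topology

/-!
The factors other than `W₀` commute with `W₀`, so they can all be moved to the left: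
`Φ(m, k) = T * W₀ ^ c` with `T` stochastic and `c` the number of factors equal to `W₀`.
Once `c ≥ d`, `Φ(m, k) = (T * W₀ ^ (c - d)) * W₀ ^ d` is a stochastic matrix times one with
entries `≥ ε`.
-/

theorem le_mul_apply_of_mem_rowStochastic {R ι : Type*} [Fintype ι] [DecidableEq ι] [Semiring R]
    [PartialOrder R] [IsOrderedRing R] {T P : Matrix ι ι R} {ε : R}
    (hT : T ∈ rowStochastic R ι) (hP : ∀ i j, ε ≤ P i j) (i j : ι) : ε ≤ (T * P) i j :=
  calc ε = ∑ l, T i l * ε := by rw [← Finset.sum_mul, sum_row_of_mem_rowStochastic hT, one_mul]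
    _ ≤ ∑ l, T i l * P l j := by
      gcongr with l
      · exact nonneg_of_mem_rowStochastic hT
      · exact hP l j

open Classical in
theorem Phi_eq_mul_pow_count {n : ℕ} {W₀ : Matrix (Fin n) (Fin n) ℝ}
    {W : ℕ → Matrix (Fin n) (Fin n) ℝ} {S : Submonoid (Matrix (Fin n) (Fin n) ℝ)}
    (hS : S ≤ Submonoid.centralizer {W₀}) (hW : ∀ i, W i = W₀ ∨ W i ∈ S) (k j : ℕ) :
    ∃ T ∈ S, Phi W k j = T * W₀ ^ Nat.count (fun i => W (k + i) = W₀) j := by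
  induction j with
  | zero => exact ⟨1, one_mem S, by simp [Phi]⟩
  | succ j ih =>
    obtain ⟨T, hT, hPhi⟩ := ih
    rw [Nat.count_succ, Phi, hPhi]
    by_cases h : W (k + j) = W₀
    · have hTW₀ : W₀ * T = T * W₀ := Submonoid.mem_centralizer_iff.1 (hS hT) W₀ rfl
      refine ⟨T, hT, ?_⟩
      rw [if_pos h, h, ← mul_assoc, hTW₀, mul_assoc, ← pow_succ']
    · refine ⟨W (k + j) * T, mul_mem ((hW _).resolve_left h) hT, ?_⟩
      rw [if_neg h, add_zero, mul_assoc]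

theorem stmt7_general {n : ℕ} (W₀ : Matrix (Fin n) (Fin n) ℝ) (hW₀ : Stochastic W₀)
    (d : ℕ) (ε : ℝ) (hd : ∀ i j, ε ≤ (W₀ ^ d) i j)
    (W : ℕ → Matrix (Fin n) (Fin n) ℝ) (hW : ∀ k, Stochastic (W k))
    (hWk : ∀ k, W k = W₀ ∨ W k * W₀ = W₀ * W k)
    (hinf : {k | W k = W₀}.Infinite) :
    ∀ k, ∃ m > k, ∀ i j, ε ≤ Phi W k (m - k) i j := by
  classical
  intro k
  have hW_mem : ∀ i, W i = W₀ ∨ W i ∈ rowStochastic ℝ (Fin n) ⊓ Submonoid.centralizer {W₀} :=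
    fun i => (hWk i).imp_right fun hc =>
      ⟨mem_rowStochastic_iff_sum.2 (hW i), Submonoid.mem_centralizer_iff.2 fun _ h => h ▸ hc.symm⟩
  have hinf_shift : {i | W (k + i) = W₀}.Infinite := by
    refine Set.infinite_of_forall_exists_gt fun a => ?_
    obtain ⟨b, hb, hab⟩ := hinf.exists_gt (k + a)
    exact ⟨b - k, by simpa [Nat.add_sub_cancel' (by omega : k ≤ b)] using hb, by omega⟩
  obtain ⟨j, hj⟩ := Nat.surjective_count_of_infinite_setOfPred hinf_shift d
  obtain ⟨T, hT, hPhi⟩ := Phi_eq_mul_pow_count inf_le_right hW_mem k (j + 1)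
  have hdj : d ≤ Nat.count (fun i => W (k + i) = W₀) (j + 1) := hj ▸ Nat.count_monotone _ j.le_succ
  refine ⟨k + (j + 1), by omega, ?_⟩
  rw [Nat.add_sub_cancel_left, hPhi, ← Nat.sub_add_cancel hdj, pow_add, ← mul_assoc]
  exact le_mul_apply_of_mem_rowStochastic
    (mul_mem hT.1 (pow_mem (mem_rowStochastic_iff_sum.2 hW₀) _)) hd

theorem stmt7 {n : ℕ} (W₀ : Matrix (Fin n) (Fin n) ℝ) (hW₀ : Stochastic W₀)
    (d : ℕ) (ε : ℝ) (hε : 0 < ε) (hd : ∀ i j, ε ≤ (W₀ ^ d) i j)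
    (W : ℕ → Matrix (Fin n) (Fin n) ℝ) (hW : ∀ k, Stochastic (W k))
    (hWk : ∀ k, W k = W₀ ∨ W k * W₀ = W₀ * W k)
    (hinf : {k | W k = W₀}.Infinite) :
    ∀ k, ∃ m > k, ∀ i j, ε ≤ Phi W k (m - k) i j :=
  stmt7_general W₀ hW₀ d ε hd W hW hWk hinf
end

section
/- Let W(k) be a sequence of stochastic matrices and suppose there is ε > 0 such that for every k there exists m > k with all entries of Φ(m,k) = W(m-1)⋯W(k) at least ε. Let x(k) satisfy x(k+1) ≤ W(k)·x(k) entrywise and suppose x(k) is bounded from below. Then the sequence max_i x_i(k) - min_i x_i(k) converges to 0. -/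
/-!
The maximum `vmax (x k)` is nonincreasing, since a row-stochastic matrix averages, and it is
bounded below, so it converges to some `L`. Whenever all entries of `Φ(m,k)` are at least `ε`,
every row of `Φ(m,k)` puts weight `ε` on the coordinate where `x k` is minimal, so
`vmax (x m) ≤ vmax (x k) - ε (vmax (x k) - vmin (x k))`. Hence the spread at time `k` is at most
`(vmax (x k) - L) / ε`, which tends to `0`.
-/

open Matrix Finset Filter Topology

lemma stochastic_iff_mem_rowStochastic {n : ℕ} {A : Matrix (Fin n) (Fin n) ℝ} :
    Stochastic A ↔ A ∈ rowStochastic ℝ (Fin n) :=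
  mem_rowStochastic_iff_sum.symm

lemma mulVec_mono_of_mem_rowStochastic {ι R : Type*} [Fintype ι] [DecidableEq ι] [Ring R]
    [PartialOrder R] [IsOrderedRing R] {M : Matrix ι ι R} (hM : M ∈ rowStochastic R ι)
    {u v : ι → R} (h : u ≤ v) : M *ᵥ u ≤ M *ᵥ v := fun i => by
  have := nonneg_mulVec_of_mem_rowStochastic hM (x := v - u) (fun j => sub_nonneg.2 (h j)) i
  rwa [mulVec_sub, Pi.sub_apply, sub_nonneg] at this

section Phi

variable {n : ℕ} {W : ℕ → Matrix (Fin n) (Fin n) ℝ}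

lemma Phi_mem_rowStochastic (hW : ∀ k, W k ∈ rowStochastic ℝ (Fin n)) (k : ℕ) :
    ∀ j, Phi W k j ∈ rowStochastic ℝ (Fin n)
  | 0 => (rowStochastic ℝ (Fin n)).one_mem
  | j + 1 => (rowStochastic ℝ (Fin n)).mul_mem (hW (k + j)) (Phi_mem_rowStochastic hW k j)

lemma le_Phi_mulVec (hW : ∀ k, W k ∈ rowStochastic ℝ (Fin n)) {x : ℕ → Fin n → ℝ}
    (hx : ∀ k, x (k + 1) ≤ W k *ᵥ x k) (k : ℕ) : ∀ j, x (k + j) ≤ Phi W k j *ᵥ x k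
  | 0 => by simp [Phi]
  | j + 1 => calc
      x (k + j + 1) ≤ W (k + j) *ᵥ x (k + j) := hx (k + j)
      _ ≤ W (k + j) *ᵥ (Phi W k j *ᵥ x k) :=
        mulVec_mono_of_mem_rowStochastic (hW (k + j)) (le_Phi_mulVec hW hx k j)
      _ = Phi W k (j + 1) *ᵥ x k := by rw [Phi, mulVec_mulVec]

end Phi

section Extrema

variable {n : ℕ} (hn : 0 < n)

lemma le_vmax (x : Fin n → ℝ) (i : Fin n) : x i ≤ vmax hn x :=
  le_sup' x (mem_univ i)

lemma vmin_le (x : Fin n → ℝ) (i : Fin n) : vmin hn x ≤ x i :=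
  inf'_le x (mem_univ i)

lemma vmax_le {x : Fin n → ℝ} {c : ℝ} (h : ∀ i, x i ≤ c) : vmax hn x ≤ c :=
  sup'_le _ _ fun i _ => h i

lemma vmin_le_vmax (x : Fin n → ℝ) : vmin hn x ≤ vmax hn x :=
  (vmin_le hn x ⟨0, hn⟩).trans (le_vmax hn x ⟨0, hn⟩)

lemma vmax_mono {x y : Fin n → ℝ} (h : x ≤ y) : vmax hn x ≤ vmax hn y :=
  vmax_le hn fun i => (h i).trans (le_vmax hn y i)

lemma vmax_mulVec_le {M : Matrix (Fin n) (Fin n) ℝ} (hM : M ∈ rowStochastic ℝ (Fin n))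
    (x : Fin n → ℝ) : vmax hn (M *ᵥ x) ≤ vmax hn x := by
  have hconst : M *ᵥ (vmax hn x • 1) = vmax hn x • 1 := by
    rw [mulVec_smul, one_vecMul_of_mem_rowStochastic hM]
  have h : M *ᵥ x ≤ vmax hn x • 1 :=
    hconst ▸ mulVec_mono_of_mem_rowStochastic hM fun i => by simpa using le_vmax hn x i
  exact vmax_le hn fun i => by simpa using h i

lemma vmax_mulVec_le_sub {M : Matrix (Fin n) (Fin n) ℝ} (hM : M ∈ rowStochastic ℝ (Fin n))
    {ε : ℝ} (hε : ∀ i j, ε ≤ M i j) (x : Fin n → ℝ) :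
    vmax hn (M *ᵥ x) ≤ vmax hn x - ε * (vmax hn x - vmin hn x) := by
  obtain ⟨j₀, -, hj₀⟩ := exists_mem_eq_inf' ⟨⟨0, hn⟩, mem_univ _⟩ x
  change vmin hn x = x j₀ at hj₀
  refine vmax_le hn fun i => ?_
  have hgap : ε * (vmax hn x - vmin hn x) ≤ ∑ j, M i j * (vmax hn x - x j) := calc
    ε * (vmax hn x - vmin hn x) ≤ M i j₀ * (vmax hn x - x j₀) := by
      rw [← hj₀]
      exact mul_le_mul_of_nonneg_right (hε i j₀) (sub_nonneg.2 (vmin_le_vmax hn x))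
    _ ≤ ∑ j, M i j * (vmax hn x - x j) :=
      single_le_sum (fun j _ => mul_nonneg (hM.1 i j) (sub_nonneg.2 (le_vmax hn x j)))
        (mem_univ j₀)
  have hsum : ∑ j, M i j * (vmax hn x - x j) = vmax hn x - (M *ᵥ x) i := by
    simp only [mulVec, dotProduct, mul_sub, sum_sub_distrib, ← sum_mul,
      sum_row_of_mem_rowStochastic hM i, one_mul]
  linarith

end Extrema

theorem stmt11 {n : ℕ} (hn : 0 < n) (W : ℕ → Matrix (Fin n) (Fin n) ℝ)
    (hW : ∀ k, Stochastic (W k)) (ε : ℝ) (hε : 0 < ε)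
    (hΦ : ∀ k, ∃ m > k, ∀ i j, ε ≤ Phi W k (m - k) i j)
    (x : ℕ → Fin n → ℝ) (hx : ∀ k, x (k + 1) ≤ (W k).mulVec (x k))
    (hbdd : ∃ c, ∀ k i, c ≤ x k i) :
    Tendsto (fun k => vmax hn (x k) - vmin hn (x k)) atTop (𝓝 0) := by
  simp only [stochastic_iff_mem_rowStochastic] at hW
  obtain ⟨c, hc⟩ := hbdd
  have hanti : Antitone fun k => vmax hn (x k) := antitone_nat_of_succ_le fun k =>
    (vmax_mono hn (hx k)).trans (vmax_mulVec_le hn (hW k) (x k))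
  have hbdd : BddBelow (Set.range fun k => vmax hn (x k)) :=
    ⟨c, Set.forall_mem_range.2 fun k => (hc k ⟨0, hn⟩).trans (le_vmax hn _ _)⟩
  have hlim := tendsto_atTop_ciInf hanti hbdd
  set L := ⨅ k, vmax hn (x k)
  have hspread : ∀ k, vmax hn (x k) - vmin hn (x k) ≤ (vmax hn (x k) - L) / ε := fun k => by
    obtain ⟨m, hm, hent⟩ := hΦ k
    have hxm : x m ≤ Phi W k (m - k) *ᵥ x k := by
      simpa [Nat.add_sub_cancel' hm.le] using le_Phi_mulVec hW hx k (m - k)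
    have := (vmax_mono hn hxm).trans
      (vmax_mulVec_le_sub hn (Phi_mem_rowStochastic hW k _) hent (x k))
    rw [le_div_iff₀ hε]
    linarith [ciInf_le hbdd m]
  refine squeeze_zero (fun k => sub_nonneg.2 (vmin_le_vmax hn (x k))) hspread ?_
  simpa using (hlim.sub_const L).div_const ε
end

section
/- Let W be a stochastic matrix whose graph contains two distinct strongly connected components such that an arc leads from a node in one component to a node in the other (i.e., not all strong components are isolated). Then there exists a solution x(k) of x(k+1) ≤ W·x(k), bounded from below, that does not converge. -/
/-!
Let `S` be the set of nodes reachable from the head `j` of an arc `i → j` that cannot be reversed.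
Since no arc leaves `S`, every row of `W` indexed by `S` is supported in `S`, so the indicator
`v` of `S` satisfies `v ≤ W v`; at the tail `i ∉ S` the inequality is strict, so `v ≠ W v`.
By monotonicity of `W`, the nonnegative sequence `v, W v, v, W v, …` satisfies `x(k+1) ≤ W x(k)`,
and it does not converge because it has the two distinct constant subsequences `v` and `W v`.
-/

open Matrix Finset Filter Topology

section Alternating

variable {α : Type*}

def alternating (u w : α) (k : ℕ) : α :=
  if Even k then u else w

theorem alternating_succ_le [Preorder α] {f : α → α} (hf : Monotone f) {v : α} (hv : v ≤ f v)
    (k : ℕ) : alternating v (f v) (k + 1) ≤ f (alternating v (f v) k) := by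
  rcases Nat.even_or_odd k with hk | hk
  · simp [alternating, hk, Nat.even_add_one]
  · simp [alternating, Nat.even_add_one, Nat.not_even_iff_odd.mpr hk, hv.trans (hf hv)]

theorem not_tendsto_alternating [TopologicalSpace α] [T2Space α] {u w : α} (huw : u ≠ w) (L : α) :
    ¬ Tendsto (alternating u w) atTop (𝓝 L) := by
  intro hL
  have hu : Tendsto (fun m => alternating u w (2 * m)) atTop (𝓝 L) :=
    hL.comp (strictMono_mul_left_of_pos (two_pos : (0 : ℕ) < 2)).tendsto_atTop
  have hw : Tendsto (fun m => alternating u w (2 * m + 1)) atTop (𝓝 L) :=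
    hL.comp ((strictMono_mul_left_of_pos (two_pos : (0 : ℕ) < 2)).add_const 1).tendsto_atTop
  simp only [alternating, even_two_mul, Nat.even_add_one, not_true, if_true, if_false] at hu hw
  exact huw ((tendsto_nhds_unique tendsto_const_nhds hu).trans
    (tendsto_nhds_unique tendsto_const_nhds hw).symm)

end Alternating

section NonnegMatrix

variable {ι : Type*} [Fintype ι]

theorem Matrix.mulVec_monotone_of_nonneg {R : Type*} [Semiring R] [PartialOrder R]
    [IsOrderedRing R] {W : Matrix ι ι R} (hW : ∀ i j, 0 ≤ W i j) : Monotone W.mulVec :=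
  fun _ _ huv a => Finset.sum_le_sum fun b _ => mul_le_mul_of_nonneg_left (huv b) (hW a b)

theorem Matrix.mulVec_nonneg_of_nonneg {R : Type*} [Semiring R] [PartialOrder R]
    [IsOrderedRing R] {W : Matrix ι ι R} (hW : ∀ i j, 0 ≤ W i j) {v : ι → R} (hv : 0 ≤ v) :
    0 ≤ W *ᵥ v :=
  fun a => Finset.sum_nonneg fun b _ => mul_nonneg (hW a b) (hv b)

variable {W : Matrix ι ι ℝ} {S : Set ι}

theorem indicator_le_mulVec_indicator (hW0 : ∀ i j, 0 ≤ W i j) (hW1 : ∀ i, ∑ j, W i j = 1)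
    (hS : ∀ a b, a ∈ S → 0 < W a b → b ∈ S) : S.indicator 1 ≤ W *ᵥ S.indicator 1 := by
  intro a
  by_cases ha : a ∈ S
  · have hrow : (W *ᵥ S.indicator 1) a = ∑ b, W a b := by
      refine Finset.sum_congr rfl fun b _ => ?_
      by_cases hb : b ∈ S
      · simp [hb]
      · have : W a b = 0 := le_antisymm (not_lt.mp fun h => hb (hS a b ha h)) (hW0 a b)
        simp [this]
    simp [hrow, hW1, ha]
  · rw [Set.indicator_of_notMem ha]
    exact Matrix.mulVec_nonneg_of_nonneg hW0 (Set.indicator_nonneg (fun _ _ => zero_le_one)) a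

theorem indicator_apply_lt_mulVec_indicator (hW0 : ∀ i j, 0 ≤ W i j) {a b : ι} (ha : a ∉ S)
    (hb : b ∈ S) (hab : 0 < W a b) : S.indicator 1 a < (W *ᵥ S.indicator 1) a := by
  have hterm : W a b * S.indicator 1 b ≤ (W *ᵥ S.indicator 1) a :=
    Finset.single_le_sum (f := fun c => W a c * S.indicator 1 c)
      (fun c _ => mul_nonneg (hW0 a c) (Set.indicator_nonneg (fun _ _ => zero_le_one) c))
      (Finset.mem_univ b)
  simpa [ha, hb] using hab.trans_le (by simpa [hb] using hterm)

end NonnegMatrix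

theorem stmt14 {n : ℕ} (W : Matrix (Fin n) (Fin n) ℝ) (hW : Stochastic W)
    (harc : ∃ i j : Fin n, 0 < W i j ∧
      ¬ Relation.ReflTransGen (fun a b => 0 < W a b) j i) :
    ∃ x : ℕ → Fin n → ℝ,
      (∀ k, x (k + 1) ≤ W.mulVec (x k)) ∧
      (∃ c, ∀ k i, c ≤ x k i) ∧
      ¬ ∃ L : Fin n → ℝ, Tendsto (fun k => x k) atTop (𝓝 L) := by
  obtain ⟨i, j, hij, hji⟩ := harc
  set S : Set (Fin n) := {a | Relation.ReflTransGen (fun a b => 0 < W a b) j a}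
  set v : Fin n → ℝ := S.indicator 1
  have hmono := Matrix.mulVec_monotone_of_nonneg hW.1
  have hv0 : 0 ≤ v := Set.indicator_nonneg (fun _ _ => zero_le_one)
  have hv : v ≤ W *ᵥ v := indicator_le_mulVec_indicator hW.1 hW.2 fun a b ha hab => ha.tail hab
  have hne : v ≠ W *ᵥ v := fun h =>
    (indicator_apply_lt_mulVec_indicator hW.1 hji .refl hij).ne (congrFun h i)
  have hx0 : ∀ k, 0 ≤ alternating v (W *ᵥ v) k := by
    intro k
    unfold alternating
    split_ifs
    exacts [hv0, Matrix.mulVec_nonneg_of_nonneg hW.1 hv0]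
  exact ⟨alternating v (W *ᵥ v), alternating_succ_le hmono hv, ⟨0, fun k => hx0 k⟩,
    fun ⟨L, hL⟩ => not_tendsto_alternating hne L hL⟩
end

section
/- Let W(k) be stochastic matrices with symmetric zero patterns (w_{ij}(k) > 0 ⟺ w_{ji}(k) > 0), satisfying w_{ii}(k) ≥ δ and nonzero entries ≥ δ for a fixed δ > 0. Assume the graph with arc set {(i,j) : Σ_k w_{ij}(k) = ∞} is strongly connected. Then every solution of x(k+1) ≤ W(k)·x(k) (entrywise) bounded from below converges to c·𝟙 for some c ∈ ℝ. -/
open Matrix Finset Filter Topology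

/-!
The maximum `M k = ⨆ i, x k i` is nonincreasing because each `W k` averages, so it converges to
some `L`. Let `B = M k₀`, so `x k ≤ B` from `k₀` on, and suppose `x k₀ i ≤ B - ε`. A set `S` of
coordinates lying below `B - c` stays below it as long as no weight flows between `S` and its
complement, since their rows then average over `S` only. By connectivity and divergence of the
weights such a flow does occur; by symmetry and the `δ`-bounds the coordinate on the other side
then drops below `B - δ c`, and so do those of `S` (through their diagonal weights). After
`n - 1` rounds every coordinate lies below `B - δ ^ (n - 1) ε`, hence so does the maximum. This
is impossible if `M k₀ < L + δ ^ (n - 1) ε`, so `x k i` cannot stay a fixed distance below `L`.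
-/

section Consensus

variable {ι : Type*} [Fintype ι] {W : ℕ → Matrix ι ι ℝ} {x : ℕ → ι → ℝ}

theorem sum_mul_le_of_forall_ne_zero {w y : ι → ℝ} {β : ℝ}
    (hw : ∀ j, 0 ≤ w j) (hsum : ∑ j, w j = 1) (hy : ∀ j, w j ≠ 0 → y j ≤ β) :
    ∑ j, w j * y j ≤ β :=
  calc ∑ j, w j * y j ≤ ∑ j, w j * β := by
        refine sum_le_sum fun j _ => ?_
        rcases eq_or_ne (w j) 0 with h | h
        · simp [h]
        · exact mul_le_mul_of_nonneg_left (hy j h) (hw j)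
    _ = β := by rw [← sum_mul, hsum, one_mul]

theorem sum_mul_le_sub_mul {w y : ι → ℝ} {B c δ : ℝ} {s : ι}
    (hw : ∀ j, 0 ≤ w j) (hsum : ∑ j, w j = 1) (hy : ∀ j, y j ≤ B) (hδ : δ ≤ w s) (hc : 0 ≤ c)
    (hys : y s ≤ B - c) : ∑ j, w j * y j ≤ B - δ * c := by
  have hgap : δ * c ≤ ∑ j, w j * (B - y j) :=
    calc δ * c ≤ w s * (B - y s) := mul_le_mul hδ (by linarith) hc (hw s)
      _ ≤ ∑ j, w j * (B - y j) :=
        single_le_sum (fun j _ => mul_nonneg (hw j) (sub_nonneg.2 (hy j))) (mem_univ s)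
  have hsplit : ∑ j, w j * (B - y j) = B - ∑ j, w j * y j := by
    simp only [mul_sub, sum_sub_distrib, ← sum_mul, hsum, one_mul]
  linarith

theorem Filter.frequently_pos_of_tendsto_sum_range {a : ℕ → ℝ}
    (h : Tendsto (fun K => ∑ k ∈ range K, a k) atTop atTop) : ∃ᶠ k in atTop, 0 < a k := by
  rw [Filter.Frequently, eventually_atTop]
  rintro ⟨K, hK⟩
  have hbdd : ∀ m ≥ K, ∑ k ∈ range m, a k ≤ ∑ k ∈ range K, a k := by
    intro m hm
    rw [← sum_range_add_sum_Ico _ hm]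
    have : ∑ k ∈ Ico K m, a k ≤ 0 := sum_nonpos fun k hk => not_lt.1 (hK k (mem_Ico.1 hk).1)
    linarith
  obtain ⟨m, hm, hmK⟩ :=
    ((h.eventually_gt_atTop (∑ k ∈ range K, a k)).and (eventually_ge_atTop K)).exists
  exact (hm.trans_le (hbdd m hmK)).false

theorem Relation.ReflTransGen.exists_rel_of_not {α : Type*} {r : α → α → Prop} {P : α → Prop}
    {a b : α} (h : ReflTransGen r a b) (ha : P a) (hb : ¬P b) :
    ∃ p q, P p ∧ ¬P q ∧ r p q := by
  induction h with
  | refl => exact absurd ha hb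
  | @tail c d _ hcd ih =>
    by_cases hc : P c
    · exact ⟨c, d, hc, hb, hcd⟩
    · exact ih hc

theorem antitone_iSup_of_le_mulVec [Nonempty ι] (hnn : ∀ k i j, 0 ≤ W k i j)
    (hrow : ∀ k i, ∑ j, W k i j = 1) (hx : ∀ k, x (k + 1) ≤ (W k).mulVec (x k)) :
    Antitone fun k => ⨆ i, x k i :=
  antitone_nat_of_succ_le fun k => ciSup_le fun p =>
    (hx k p).trans <| sum_mul_le_of_forall_ne_zero (hnn k p) (hrow k p) fun j _ =>
      le_ciSup (Finite.bddAbove_range _) j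

theorem forall_mem_le_of_no_outflow (hnn : ∀ k i j, 0 ≤ W k i j)
    (hrow : ∀ k i, ∑ j, W k i j = 1) (hx : ∀ k, x (k + 1) ≤ (W k).mulVec (x k))
    {S : Finset ι} {β : ℝ} {k T : ℕ} (hkT : k ≤ T)
    (hcut : ∀ m, k ≤ m → m < T → ∀ p ∈ S, ∀ q ∉ S, W m p q = 0)
    (hk : ∀ p ∈ S, x k p ≤ β) : ∀ p ∈ S, x T p ≤ β := by
  induction T, hkT using Nat.le_induction with
  | base => exact hk
  | succ m hkm ih =>
    intro p hp
    refine (hx m p).trans <| sum_mul_le_of_forall_ne_zero (hnn m p) (hrow m p) fun j hj => ?_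
    refine ih (fun m' h1 h2 => hcut m' h1 (by omega)) j ?_
    by_contra hjS
    exact hj (hcut m hkm (by omega) p hp j hjS)

theorem exists_ge_pos_from_mem_to_notMem
    (hconn : ∀ i j, Relation.ReflTransGen
      (fun a b => Tendsto (fun K => ∑ k ∈ range K, W k a b) atTop atTop) i j)
    {S : Finset ι} (hS : S.Nonempty) (hSu : S ≠ univ) (k : ℕ) :
    ∃ T, k ≤ T ∧ ∃ p ∈ S, ∃ q ∉ S, 0 < W T p q := by
  obtain ⟨a, ha⟩ := hS
  obtain ⟨b, hb⟩ : ∃ b, b ∉ S := by simpa [eq_univ_iff_forall] using hSu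
  obtain ⟨p, q, hp, hq, hpq⟩ := (hconn a b).exists_rel_of_not (P := (· ∈ S)) ha hb
  obtain ⟨T, hT, hkT⟩ :=
    ((frequently_pos_of_tendsto_sum_range hpq).and_eventually (eventually_ge_atTop k)).exists
  exact ⟨T, hkT, p, hp, q, hq, hT⟩

theorem exists_forall_mem_insert_le_sub_mul [DecidableEq ι] {δ : ℝ}
    (hnn : ∀ k i j, 0 ≤ W k i j) (hrow : ∀ k i, ∑ j, W k i j = 1)
    (hsym : ∀ k i j, 0 < W k i j ↔ 0 < W k j i) (hdiag : ∀ k i, δ ≤ W k i i)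
    (hoff : ∀ k i j, i ≠ j → W k i j = 0 ∨ δ ≤ W k i j)
    (hconn : ∀ i j, Relation.ReflTransGen
      (fun a b => Tendsto (fun K => ∑ k ∈ range K, W k a b) atTop atTop) i j)
    (hx : ∀ k, x (k + 1) ≤ (W k).mulVec (x k)) {B c : ℝ} {k : ℕ}
    (hB : ∀ m ≥ k, ∀ j, x m j ≤ B) (hc : 0 ≤ c) {S : Finset ι} (hS : S.Nonempty)
    (hSu : S ≠ univ) (hxS : ∀ p ∈ S, x k p ≤ B - c) :
    ∃ k' ≥ k, ∃ b ∉ S, ∀ p ∈ insert b S, x k' p ≤ B - δ * c := by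
  classical
  have hcross := exists_ge_pos_from_mem_to_notMem hconn hS hSu k
  set T := Nat.find hcross
  obtain ⟨hkT, a, ha, b, hb, hab⟩ := Nat.find_spec hcross
  have hcut : ∀ m, k ≤ m → m < T → ∀ p ∈ S, ∀ q ∉ S, W m p q = 0 :=
    fun m hkm hmT p hp q hq => le_antisymm
      (not_lt.1 fun h => Nat.find_min hcross hmT ⟨hkm, p, hp, q, hq, h⟩) (hnn m p q)
  have hxT := forall_mem_le_of_no_outflow hnn hrow hx hkT hcut hxS
  have hba : δ ≤ W T b a :=
    (hoff T b a (ne_of_mem_of_not_mem ha hb).symm).resolve_left ((hsym T a b).1 hab).ne'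
  refine ⟨T + 1, by omega, b, hb, fun p hp => (hx T p).trans ?_⟩
  rcases mem_insert.1 hp with rfl | hp
  · exact sum_mul_le_sub_mul (hnn T p) (hrow T p) (hB T hkT) hba hc (hxT a ha)
  · exact sum_mul_le_sub_mul (hnn T p) (hrow T p) (hB T hkT) (hdiag T p) hc (hxT p hp)

theorem exists_forall_le_sub_pow_mul [Nonempty ι] [DecidableEq ι] {δ : ℝ} (hδ : 0 ≤ δ)
    (hnn : ∀ k i j, 0 ≤ W k i j) (hrow : ∀ k i, ∑ j, W k i j = 1)
    (hsym : ∀ k i j, 0 < W k i j ↔ 0 < W k j i) (hdiag : ∀ k i, δ ≤ W k i i)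
    (hoff : ∀ k i j, i ≠ j → W k i j = 0 ∨ δ ≤ W k i j)
    (hconn : ∀ i j, Relation.ReflTransGen
      (fun a b => Tendsto (fun K => ∑ k ∈ range K, W k a b) atTop atTop) i j)
    (hx : ∀ k, x (k + 1) ≤ (W k).mulVec (x k)) {B ε : ℝ} {k₀ : ℕ}
    (hB : ∀ m ≥ k₀, ∀ j, x m j ≤ B) (hε : 0 ≤ ε) {i : ι} (hi : x k₀ i ≤ B - ε) :
    ∃ k ≥ k₀, ∀ p, x k p ≤ B - δ ^ (Fintype.card ι - 1) * ε := by
  have grow : ∀ m, 1 ≤ m → m ≤ Fintype.card ι → ∃ k ≥ k₀, ∃ S : Finset ι,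
      #S = m ∧ ∀ p ∈ S, x k p ≤ B - δ ^ (m - 1) * ε := by
    intro m hm
    induction m, hm using Nat.le_induction with
    | base => exact fun _ => ⟨k₀, le_rfl, {i}, card_singleton i, by simpa using hi⟩
    | succ m hm ih =>
      intro hmn
      obtain ⟨k, hk, S, hSm, hxS⟩ := ih (by omega)
      have hSu : S ≠ univ := fun h => by simp [h] at hSm; omega
      obtain ⟨k', hk', b, hb, hxb⟩ := exists_forall_mem_insert_le_sub_mul hnn hrow hsym hdiag
        hoff hconn hx (fun m' hm' => hB m' (hk.trans hm')) (by positivity)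
        (card_pos.1 (by omega)) hSu hxS
      refine ⟨k', hk.trans hk', insert b S, by rw [card_insert_of_notMem hb, hSm], ?_⟩
      have hpow : δ * (δ ^ (m - 1) * ε) = δ ^ (m + 1 - 1) * ε := by
        rw [← mul_assoc, ← pow_succ']
        congr 2
        omega
      simpa only [hpow] using hxb
  obtain ⟨k, hk, S, hS, hxS⟩ := grow _ Fintype.card_pos le_rfl
  rw [card_eq_iff_eq_univ] at hS
  exact ⟨k, hk, fun p => hxS p (hS ▸ mem_univ p)⟩

end Consensus

theorem stmt16 {n : ℕ} (W : ℕ → Matrix (Fin n) (Fin n) ℝ)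
    (hW : ∀ k, Stochastic (W k)) (δ : ℝ) (hδ : 0 < δ)
    (hsym : ∀ k i j, 0 < W k i j ↔ 0 < W k j i)
    (hdiag : ∀ k i, δ ≤ W k i i)
    (hoff : ∀ k i j, i ≠ j → W k i j = 0 ∨ δ ≤ W k i j)
    (hconn : ∀ i j, Relation.ReflTransGen
      (fun a b => Tendsto (fun K => ∑ k ∈ Finset.range K, W k a b) atTop atTop) i j)
    (x : ℕ → Fin n → ℝ) (hx : ∀ k, x (k + 1) ≤ (W k).mulVec (x k))
    (hbdd : ∃ c, ∀ k i, c ≤ x k i) :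
    ∃ c : ℝ, Tendsto (fun k => x k) atTop (𝓝 fun _ => c) := by
  rcases isEmpty_or_nonempty (Fin n) with _ | _
  · exact ⟨0, (tendsto_pure.2 (Eventually.of_forall fun _ => Subsingleton.elim _ _)).mono_right
      (pure_le_nhds _)⟩
  have hnn k := (hW k).1
  have hrow k := (hW k).2
  set M := fun k => ⨆ i, x k i
  have hxM : ∀ k i, x k i ≤ M k := fun k i => le_ciSup (Finite.bddAbove_range _) i
  have hManti : Antitone M := antitone_iSup_of_le_mulVec hnn hrow hx
  obtain ⟨c, hc⟩ := hbdd
  have hMbdd : BddBelow (Set.range M) :=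
    ⟨c, Set.forall_mem_range.2 fun k => (hc k (Classical.arbitrary _)).trans (hxM k _)⟩
  set L := ⨅ k, M k
  have hML : Tendsto M atTop (𝓝 L) := tendsto_atTop_ciInf hManti hMbdd
  refine ⟨L, tendsto_pi_nhds.2 fun i => tendsto_order.2 ⟨fun a ha => ?_, fun a ha =>
    (hML.eventually_lt_const ha).mono fun k hk => (hxM k i).trans_lt hk⟩⟩
  by_contra hfreq
  have hgap : 0 < δ ^ (n - 1) * (L - a) := mul_pos (pow_pos hδ _) (sub_pos.2 ha)
  obtain ⟨k₀, hxk₀, hMk₀⟩ := ((not_eventually.1 hfreq).and_eventually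
    (hML.eventually_lt_const (lt_add_of_pos_right L hgap))).exists
  obtain ⟨k, -, hk⟩ := exists_forall_le_sub_pow_mul hδ.le hnn hrow hsym hdiag hoff hconn hx
    (B := M k₀) (fun m hm j => (hxM m j).trans (hManti hm)) (sub_nonneg.2 ha.le) (i := i)
    (by linarith [ciInf_le hMbdd k₀, not_lt.1 hxk₀])
  have hMk : M k ≤ M k₀ - δ ^ (n - 1) * (L - a) := by simpa using ciSup_le hk
  linarith [ciInf_le hMbdd k]
end
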